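/- Soundness with respect to the inductive characterization of regular semantics: for every logic program with coclauses (P,coP), every finite set H of finite atoms, every goal ⟨A1,...,An | E⟩ with Var(H) ⊆ Var(E), if P;coP ⊢ H : ⟨A1,...,An | E⟩ ⇒ E' is derivable, then for every σ ∈ sol(E') and every i ∈ {1,...,n}, the judgment (Hσ ⊢ Aiσ) belongs to the inductive interpretation of Loop(P,coP). -/

import Mathlib

/- Framework: flexible coinductive logic programming (logic programs with coclauses).
   Terms are possibly infinite trees, modelled as M-types of a polynomial functor. -/

namespace FlexLP

/-- A first-order signature: function symbols and predicate symbols, each with an arity.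
Variables are represented by natural numbers (a countably infinite set). -/
structure Sig where
  Func : Type
  far : Func → ℕ
  Pred : Type
  par : Pred → ℕ

/-- Polynomial functor whose M-type is the type of possibly infinite terms:
nodes are labelled by function symbols (with `far` children) or variables (no children). -/
def TermP (S : Sig) : PFunctor :=
  ⟨S.Func ⊕ ℕ, fun l => Fin (match l with | Sum.inl f => S.far f | Sum.inr _ => 0)⟩

/-- Possibly infinite terms over the signature `S`. -/
def Term (S : Sig) : Type := (TermP S).M

/-- The term consisting of a single variable `x`. -/
def Term.var (S : Sig) (x : ℕ) : Term S :=
  PFunctor.M.mk ⟨Sum.inr x, fun i => i.elim0⟩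

/-- The variable `x` occurs in the term `t`. -/
inductive Term.Occurs (S : Sig) (x : ℕ) : Term S → Prop
  | root (t : Term S) (h : (PFunctor.M.dest t).1 = Sum.inr x) : Term.Occurs S x t
  | child (t : Term S) (i : (TermP S).B (PFunctor.M.dest t).1)
      (h : Term.Occurs S x ((PFunctor.M.dest t).2 i)) : Term.Occurs S x t

/-- The term `t` is finite (syntactic): all its branches are finite. -/
inductive Term.IsFinite (S : Sig) : Term S → Prop
  | mk (t : Term S) (h : ∀ i, Term.IsFinite S ((PFunctor.M.dest t).2 i)) : Term.IsFinite S t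

/-- The term `t` is ground: no variable occurs in it. -/
def Term.Ground (S : Sig) (t : Term S) : Prop := ∀ x, ¬ Term.Occurs S x t

/-- A substitution: a map from a finite set of variables to terms. -/
structure Subst (S : Sig) where
  toFun : ℕ → Option (Term S)
  finDom : {x | (toFun x).isSome}.Finite

/-- Domain of a substitution. -/
def Subst.dom {S : Sig} (σ : Subst S) : Set ℕ := {x | (σ.toFun x).isSome}

/-- A substitution is ground if all its values are ground terms. -/
def Subst.Ground {S : Sig} (σ : Subst S) : Prop :=
  ∀ x t, σ.toFun x = some t → Term.Ground S t

/-- `σ ⊑ θ` : `dom σ ⊆ dom θ` and the two substitutions agree on `dom σ`. -/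
def Subst.le {S : Sig} (σ θ : Subst S) : Prop :=
  ∀ x t, σ.toFun x = some t → θ.toFun x = some t

/-- One step of (simultaneous) substitution application, as a coalgebra.
The boolean flag records whether we are still in the original term (`true`)
or inside a substituted term (`false`). -/
def substStep (S : Sig) (σ : Subst S) : Term S × Bool → (TermP S).Obj (Term S × Bool) :=
  fun p =>
    match PFunctor.M.dest p.1, p.2 with
    | ⟨Sum.inl f, ch⟩, b => ⟨Sum.inl f, fun i => (ch i, b)⟩
    | ⟨Sum.inr x, ch⟩, true =>
        match σ.toFun x with
        | some s =>
            match PFunctor.M.dest s with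
            | ⟨l, ch'⟩ => ⟨l, fun i => (ch' i, false)⟩
        | none => ⟨Sum.inr x, fun i => (ch i, true)⟩
    | ⟨Sum.inr x, ch⟩, false => ⟨Sum.inr x, fun i => (ch i, false)⟩

/-- Application `tσ` of a substitution to a term. -/
def Term.subst {S : Sig} (t : Term S) (σ : Subst S) : Term S :=
  PFunctor.M.corec (substStep S σ) (t, true)

/-- Atoms: a predicate symbol applied to terms (a possibly infinite tree whose
root is labelled by a predicate symbol). -/
structure Atom (S : Sig) where
  pred : S.Pred
  args : Fin (S.par pred) → Term S

/-- The variable `x` occurs in the atom `A`. -/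
def Atom.Occurs {S : Sig} (x : ℕ) (A : Atom S) : Prop := ∃ i, Term.Occurs S x (A.args i)

/-- Ground atoms. The set of all ground atoms is the complete Herbrand base. -/
def Atom.Ground {S : Sig} (A : Atom S) : Prop := ∀ i, Term.Ground S (A.args i)

/-- Finite (syntactic) atoms. -/
def Atom.IsFinite {S : Sig} (A : Atom S) : Prop := ∀ i, Term.IsFinite S (A.args i)

/-- Application of a substitution to an atom. -/
def Atom.subst {S : Sig} (A : Atom S) (σ : Subst S) : Atom S :=
  ⟨A.pred, fun i => Term.subst (A.args i) σ⟩

/-- A (definite) clause `head :- body`, made of finite atoms. -/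
structure Clause (S : Sig) where
  head : Atom S
  body : List (Atom S)
  finHead : head.IsFinite
  finBody : ∀ B ∈ body, B.IsFinite

/-- Variables occurring in a clause. -/
def clauseVars {S : Sig} (C : Clause S) : Set ℕ :=
  {x | Atom.Occurs x C.head ∨ ∃ B ∈ C.body, Atom.Occurs x B}

/-- `Ground P` : the ground instances of clauses of `P`, viewed as inference rules
(pairs premises/conclusion) on the complete Herbrand base. -/
def GroundInst {S : Sig} (P : Set (Clause S)) : Set (Atom S × List (Atom S)) :=
  {r | ∃ C ∈ P, ∃ σ : Subst S, σ.Ground ∧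
        r.1 = C.head.subst σ ∧ r.2 = C.body.map (fun B => B.subst σ) ∧
        r.1.Ground ∧ ∀ B ∈ r.2, B.Ground}

/-- The (one step) inference operator `T_P` associated to a program. -/
def TP {S : Sig} (P : Set (Clause S)) (I : Set (Atom S)) : Set (Atom S) :=
  {A | ∃ r ∈ GroundInst P, r.1 = A ∧ ∀ B ∈ r.2, B ∈ I}

/-- `I` is a model of `P`. -/
def IsModel {S : Sig} (P : Set (Clause S)) (I : Set (Atom S)) : Prop := TP P I ⊆ I

/-- `I` is a comodel of `P`. -/
def IsComodel {S : Sig} (P : Set (Clause S)) (I : Set (Atom S)) : Prop := I ⊆ TP P I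

/-- `Ind P` : the inductive declarative semantics, i.e. the least model of `P`. -/
def Ind {S : Sig} (P : Set (Clause S)) : Set (Atom S) := ⋂₀ {I | IsModel P I}

/-- `FlexCo (P,coP)` : the declarative semantics of a logic program with coclauses,
i.e. the largest comodel of `P` included in `Ind (P ∪ coP)` (union of all such comodels). -/
def FlexCo {S : Sig} (P coP : Set (Clause S)) : Set (Atom S) :=
  ⋃₀ {I | IsComodel P I ∧ I ⊆ Ind (P ∪ coP)}

/-- `FlexReg (P,coP)` : the regular declarative semantics, i.e. the union of all
finite comodels of `P` included in `Ind (P ∪ coP)`. -/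
def FlexReg {S : Sig} (P coP : Set (Clause S)) : Set (Atom S) :=
  ⋃₀ {I | I.Finite ∧ IsComodel P I ∧ I ⊆ Ind (P ∪ coP)}

/-- An equation `s ≐ t` between terms. -/
abbrev Eqn (S : Sig) := Term S × Term S

/-- Variables occurring in a set of equations. -/
def eqnVars {S : Sig} (E : Set (Eqn S)) : Set ℕ :=
  {x | ∃ e ∈ E, Term.Occurs S x e.1 ∨ Term.Occurs S x e.2}

/-- `E` is a finite set of equations between finite (syntactic) terms. -/
def EqnSetFin {S : Sig} (E : Set (Eqn S)) : Prop :=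
  E.Finite ∧ ∀ e ∈ E, Term.IsFinite S e.1 ∧ Term.IsFinite S e.2

/-- `sol E` : the set of solutions of `E`, i.e. ground substitutions defined on all
variables of `E` that unify all the equations in `E`. -/
def sol {S : Sig} (E : Set (Eqn S)) : Set (Subst S) :=
  {σ | σ.Ground ∧ eqnVars E ⊆ σ.dom ∧ ∀ e ∈ E, e.1.subst σ = e.2.subst σ}

/-- `E` is solvable. -/
def Solvable {S : Sig} (E : Set (Eqn S)) : Prop := (sol E).Nonempty

/-- `eqs(A,B)` : the equations between the corresponding arguments of two atoms
with the same predicate symbol. -/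
def atomEqs {S : Sig} (A B : Atom S) : Set (Eqn S) :=
  {e | ∃ (h : A.pred = B.pred) (i : Fin (S.par A.pred)),
        e = (A.args i, B.args (Fin.cast (congrArg S.par h) i))}

/-- Variables occurring in a set of atoms. -/
def atomsVars {S : Sig} (H : Set (Atom S)) : Set ℕ := {x | ∃ A ∈ H, Atom.Occurs x A}

/-- Variables occurring in a sequence of atoms (a goal). -/
def goalVars {S : Sig} (G : List (Atom S)) : Set ℕ := {x | ∃ A ∈ G, Atom.Occurs x A}

/-- `ρ` is a renaming of the variables of clause `C` to fresh variables avoiding `avoid`: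
it maps (injectively) every variable of `C` to a variable not in `avoid`. -/
def FreshRenamingFor {S : Sig} (ρ : Subst S) (C : Clause S) (avoid : Set ℕ) : Prop :=
  (∀ x t, ρ.toFun x = some t → ∃ y, t = Term.var S y ∧ y ∉ avoid) ∧
  clauseVars C ⊆ ρ.dom ∧
  (∀ x y, ρ.toFun x = ρ.toFun y → (ρ.toFun x).isSome → x = y)

/-- The big-step operational semantics judgment `P;coP ⊢ H : ⟨G | E⟩ ⇒ E'` of
flexible coSLD resolution, inductively defined by the rules (empty), (co-hyp), (step). -/
inductive OpSem (S : Sig) :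
    Set (Clause S) → Set (Clause S) → Set (Atom S) → List (Atom S) →
      Set (Eqn S) → Set (Eqn S) → Prop
  | empty (P coP : Set (Clause S)) (H : Set (Atom S)) (E : Set (Eqn S)) :
      OpSem S P coP H [] E E
  | cohyp {P coP : Set (Clause S)} {H : Set (Atom S)} {G1 G2 : List (Atom S)}
      {A B : Atom S} {E1 E2 E3 : Set (Eqn S)} :
      coP ≠ ∅ → B ∈ H → A.pred = B.pred →
      Solvable (E1 ∪ atomEqs A B) →
      OpSem S (P ∪ coP) ∅ ∅ [A] (E1 ∪ atomEqs A B) E2 →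
      OpSem S P coP H (G1 ++ G2) E2 E3 →
      OpSem S P coP H (G1 ++ A :: G2) E1 E3
  | step {P coP : Set (Clause S)} {H : Set (Atom S)} {G1 G2 : List (Atom S)}
      {A : Atom S} {E1 E2 E3 : Set (Eqn S)} (C : Clause S) (ρ : Subst S) :
      C ∈ P →
      FreshRenamingFor ρ C (eqnVars E1 ∪ atomsVars H ∪ goalVars (G1 ++ A :: G2)) →
      A.pred = C.head.pred →
      Solvable (E1 ∪ atomEqs A (C.head.subst ρ)) →
      OpSem S P coP (H ∪ {A}) (C.body.map (fun B => B.subst ρ))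
        (E1 ∪ atomEqs A (C.head.subst ρ)) E2 →
      OpSem S P coP H (G1 ++ G2) E2 E3 →
      OpSem S P coP H (G1 ++ A :: G2) E1 E3

/-- `Ans(G,E,I)` : the set of answers to the goal `⟨G | E⟩` correct in the
interpretation `I`. -/
def Ans {S : Sig} (G : List (Atom S)) (E : Set (Eqn S)) (I : Set (Atom S)) :
    Set (Subst S) :=
  {σ | σ ∈ sol E ∧ goalVars G ⊆ σ.dom ∧ ∀ A ∈ G, A.subst σ ∈ I}

/-- The inductive interpretation of the inference system `Loop(P,coP)`, whose judgments
`H ⊢ A` pair a ground atom with a set of ground atoms (circular hypotheses);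
rules: (hp) `H ⊢ A` if `A ∈ H` and `A ∈ Ind (P ∪ coP)`;
(rule) from `H∪{A} ⊢ B` for every premise `B` of a ground instance of a clause of `P`
with conclusion `A`, infer `H ⊢ A`. -/
inductive LoopInd {S : Sig} (P coP : Set (Clause S)) : Set (Atom S) → Atom S → Prop
  | hp {H : Set (Atom S)} {A : Atom S} :
      A ∈ H → A ∈ Ind (P ∪ coP) → LoopInd P coP H A
  | rule {H : Set (Atom S)} {A : Atom S} (r : Atom S × List (Atom S)) :
      r ∈ GroundInst P → r.1 = A →
      (∀ B ∈ r.2, LoopInd P coP (H ∪ {A}) B) →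
      LoopInd P coP H A

/-!
Induction on the resolution derivation. Equation sets only grow along a derivation, so a
solution `σ` of the final equations solves every intermediate one and grounds every atom of every
intermediate goal. A (co-hyp) step becomes an (hp) axiom: `σ` unifies the selected atom with a
hypothesis, and the inner derivation, which starts without hypotheses, only uses (rule), so its
conclusion lies in the least model of `P ∪ coP`. A (step) with the clause `C` renamed by `ρ`
becomes a (rule) step, whose ground instance is `C` under the composite of `ρ` and `σ`.
-/

namespace Term

variable {S : Sig} {σ : Subst S}

open PFunctor

lemma dest_var (x : ℕ) : M.dest (Term.var S x) = ⟨Sum.inr x, Fin.elim0⟩ :=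
  M.dest_mk _

lemma eq_var_of_dest {t : Term S} {x : ℕ} {ch} (e : M.dest t = ⟨Sum.inr x, ch⟩) :
    t = Term.var S x := by
  rw [← M.mk_dest t, e, Term.var]
  exact congrArg M.mk (congrArg (Sigma.mk _) (funext fun i => i.elim0))

lemma occurs_var_self (x : ℕ) : Occurs S x (Term.var S x) :=
  Occurs.root _ (by rw [dest_var])

lemma occurs_of_dest {x : ℕ} {t : Term S} {l ch} (e : M.dest t = ⟨l, ch⟩) (i : (TermP S).B l)
    (h : Occurs S x (ch i)) : Occurs S x t := by
  have key : ∀ p, M.dest t = p → ∀ i, Occurs S x (p.2 i) → Occurs S x t := by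
    rintro p rfl i h
    exact Occurs.child t i h
  exact key _ e i h

lemma substStep_of_dest_func {t : Term S} {f : S.Func} {ch} (e : M.dest t = ⟨Sum.inl f, ch⟩)
    (b : Bool) : substStep S σ (t, b) = ⟨Sum.inl f, fun i => (ch i, b)⟩ := by
  simp only [substStep, e]; rfl

lemma substStep_false {t : Term S} {l ch} (e : M.dest t = ⟨l, ch⟩) :
    substStep S σ (t, false) = ⟨l, fun i => (ch i, false)⟩ := by
  simp only [substStep, e]; cases l <;> rfl

lemma substStep_of_dest_var_none {t : Term S} {x : ℕ} {ch} (e : M.dest t = ⟨Sum.inr x, ch⟩)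
    (hx : σ.toFun x = none) :
    substStep S σ (t, true) = ⟨Sum.inr x, fun i => (ch i, true)⟩ := by
  simp only [substStep, e, hx]; rfl

lemma substStep_of_dest_var_some {t : Term S} {x : ℕ} {ch} (e : M.dest t = ⟨Sum.inr x, ch⟩)
    {s l chs} (hx : σ.toFun x = some s) (hs : M.dest s = ⟨l, chs⟩) :
    substStep S σ (t, true) = ⟨l, fun i => (chs i, false)⟩ := by
  simp only [substStep, e, hx, hs]; rfl

lemma corec_substStep_false (s : Term S) : M.corec (substStep S σ) (s, false) = s := by
  apply M.bisim (fun a b => a = M.corec (substStep S σ) (b, false)) _ _ _ rfl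
  rintro a b rfl
  rcases e : M.dest b with ⟨l, ch⟩
  refine ⟨l, _, ch, ?_, rfl, fun i => rfl⟩
  rw [M.dest_corec, substStep_false e, PFunctor.map_eq]
  rfl

lemma dest_subst_of_dest_func {t : Term S} {f : S.Func} {ch} (e : M.dest t = ⟨Sum.inl f, ch⟩) :
    M.dest (t.subst σ) = ⟨Sum.inl f, fun i => Term.subst (ch i) σ⟩ := by
  rw [Term.subst, M.dest_corec, substStep_of_dest_func e]
  rfl

lemma subst_of_dest_var {t : Term S} {x : ℕ} {ch} (e : M.dest t = ⟨Sum.inr x, ch⟩) :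
    t.subst σ = (σ.toFun x).getD (Term.var S x) := by
  rcases hx : σ.toFun x with _ | s
  · apply eq_var_of_dest (ch := fun i => M.corec (substStep S σ) (ch i, true))
    rw [Term.subst, M.dest_corec, substStep_of_dest_var_none e hx]
    rfl
  · rcases hs : M.dest s with ⟨l, chs⟩
    have hdest : M.dest (t.subst σ) = ⟨l, chs⟩ := by
      rw [Term.subst, M.dest_corec, substStep_of_dest_var_some e hx hs, PFunctor.map_eq]
      exact congrArg (Sigma.mk l) (funext fun i => corec_substStep_false _)
    rw [Option.getD_some, ← M.mk_dest (t.subst σ), hdest, ← hs]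
    exact M.mk_dest s

lemma var_subst (x : ℕ) : (Term.var S x).subst σ = (σ.toFun x).getD (Term.var S x) :=
  subst_of_dest_var (dest_var x)

lemma occurs_subst_of_occurs {s : Term S} {y z : ℕ} (hz : Occurs S z s)
    (hy : Occurs S y ((Term.var S z).subst σ)) : Occurs S y (s.subst σ) := by
  induction hz with
  | root s hd =>
    rcases e : M.dest s with ⟨l, ch⟩
    rw [e] at hd
    subst hd
    rwa [eq_var_of_dest e]
  | child s i _ IH =>
    rcases e : M.dest s with ⟨l, ch⟩
    revert i
    rw [e]
    intro i _ IH
    cases l with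
    | inl f => exact occurs_of_dest (dest_subst_of_dest_func e) i IH
    | inr _ => exact i.elim0

lemma exists_occurs_of_occurs_subst {s : Term S} {y : ℕ} (hy : Occurs S y (s.subst σ)) :
    ∃ z, Occurs S z s ∧ Occurs S y ((Term.var S z).subst σ) := by
  generalize hu : s.subst σ = u at hy
  induction hy generalizing s with
  | root u hd =>
    rcases e : M.dest s with ⟨f | z, ch⟩
    · rw [← hu, dest_subst_of_dest_func e] at hd
      cases hd
    · refine ⟨z, Occurs.root s (by rw [e]), ?_⟩
      rw [← eq_var_of_dest e, hu]
      exact Occurs.root u hd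
  | child u i h IH =>
    rcases e : M.dest s with ⟨f | z, ch⟩
    · subst hu
      revert i
      rw [dest_subst_of_dest_func e]
      intro i _ IH
      obtain ⟨z, hz, hy⟩ := IH rfl
      exact ⟨z, occurs_of_dest e i hz, hy⟩
    · refine ⟨z, Occurs.root s (by rw [e]), ?_⟩
      rw [← eq_var_of_dest e, hu]
      exact Occurs.child u i h

lemma ground_subst_iff {t : Term S} :
    Ground S (t.subst σ) ↔ ∀ x, Occurs S x t → Ground S ((Term.var S x).subst σ) := by
  refine ⟨fun h x hx y hy => h y (occurs_subst_of_occurs hx hy), fun h y hy => ?_⟩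
  obtain ⟨z, hz, hy⟩ := exists_occurs_of_occurs_subst hy
  exact h z hz y hy

lemma ground_var_subst_iff (hσ : σ.Ground) {x : ℕ} :
    Ground S ((Term.var S x).subst σ) ↔ x ∈ σ.dom := by
  rw [var_subst]
  change _ ↔ (σ.toFun x).isSome
  rcases hx : σ.toFun x with _ | s
  · simpa using fun h => h x (occurs_var_self x)
  · simpa using hσ x s hx

lemma ground_subst (hσ : σ.Ground) {t : Term S} (hdom : ∀ x, Occurs S x t → x ∈ σ.dom) :
    Ground S (t.subst σ) :=
  ground_subst_iff.2 fun x hx => (ground_var_subst_iff hσ).2 (hdom x hx)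

end Term

open Classical in
/-- The composite of `ρ` and `σ`, restricted to the variables it sends to ground terms so that
it is a ground substitution. -/
noncomputable def Subst.groundComp {S : Sig} (ρ σ : Subst S) : Subst S where
  toFun x :=
    if Term.Ground S (((Term.var S x).subst ρ).subst σ) then
      some (((Term.var S x).subst ρ).subst σ)
    else none
  finDom := by
    refine (ρ.finDom.union σ.finDom).subset fun x hx => ?_
    by_contra hnot
    simp only [Set.mem_union, Set.mem_ofPred_eq, not_or, Bool.not_eq_true,
      Option.isSome_eq_false_iff, Option.isNone_iff_eq_none] at hnot
    have hvar : ((Term.var S x).subst ρ).subst σ = Term.var S x := by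
      rw [Term.var_subst, hnot.1, Option.getD_none, Term.var_subst, hnot.2, Option.getD_none]
    simp only [hvar, Set.mem_ofPred_eq] at hx
    split_ifs at hx with hg
    · exact hg x (Term.occurs_var_self x)
    · simp at hx

namespace Subst

variable {S : Sig} {ρ σ : Subst S}

lemma groundComp_ground : (ρ.groundComp σ).Ground := by
  intro x t h
  simp only [groundComp] at h
  split_ifs at h with hg
  exact Option.some_injective _ h ▸ hg

lemma groundComp_apply {x : ℕ} (hg : Term.Ground S (((Term.var S x).subst ρ).subst σ)) :
    (ρ.groundComp σ).toFun x = some (((Term.var S x).subst ρ).subst σ) := by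
  simp [groundComp, hg]

end Subst

namespace Term

variable {S : Sig} {ρ σ : Subst S}

open PFunctor

lemma ground_var_subst_subst {t : Term S} (hg : Ground S ((t.subst ρ).subst σ)) {x : ℕ}
    (hx : Occurs S x t) : Ground S (((Term.var S x).subst ρ).subst σ) :=
  ground_subst_iff.2 fun _ hz => ground_subst_iff.1 hg _ (occurs_subst_of_occurs hx hz)

lemma subst_subst {t : Term S} (hfin : IsFinite S t) (hg : Ground S ((t.subst ρ).subst σ)) :
    (t.subst ρ).subst σ = t.subst (ρ.groundComp σ) := by
  replace hg := fun x => ground_var_subst_subst hg (x := x)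
  induction hfin with
  | mk t _ IH =>
    rcases e : M.dest t with ⟨f | z, ch⟩
    · rw [← M.mk_dest ((t.subst ρ).subst σ), ← M.mk_dest (t.subst (ρ.groundComp σ)),
        dest_subst_of_dest_func (dest_subst_of_dest_func e), dest_subst_of_dest_func e]
      rw [e] at IH
      exact congrArg M.mk (congrArg (Sigma.mk _) (funext fun i =>
        IH i fun x hx => hg x (occurs_of_dest e i hx)))
    · have hz := hg z (Occurs.root t (by rw [e]))
      rw [eq_var_of_dest e, var_subst (σ := ρ.groundComp σ), Subst.groundComp_apply hz,
        Option.getD_some]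

end Term

lemma eqnVars_mono {S : Sig} {E E' : Set (Eqn S)} (h : E ⊆ E') : eqnVars E ⊆ eqnVars E' :=
  fun _ ⟨e, he, hx⟩ => ⟨e, h he, hx⟩

lemma sol_anti {S : Sig} {E E' : Set (Eqn S)} (h : E ⊆ E') : sol E' ⊆ sol E :=
  fun _ ⟨hg, hdom, hs⟩ => ⟨hg, (eqnVars_mono h).trans hdom, fun e he => hs e (h he)⟩

namespace Atom

variable {S : Sig} {ρ σ : Subst S}

lemma ground_subst (hσ : σ.Ground) {A : Atom S} (hdom : ∀ x, A.Occurs x → x ∈ σ.dom) :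
    (A.subst σ).Ground :=
  fun i => Term.ground_subst hσ fun x hx => hdom x ⟨i, hx⟩

lemma subst_subst {A : Atom S} (hfin : A.IsFinite) (hg : ((A.subst ρ).subst σ).Ground) :
    (A.subst ρ).subst σ = A.subst (ρ.groundComp σ) :=
  congrArg (Atom.mk A.pred) (funext fun i => Term.subst_subst (hfin i) (hg i))

lemma subst_eq_of_mem_sol_atomEqs {A B : Atom S} (hp : A.pred = B.pred)
    (hσ : σ ∈ sol (atomEqs A B)) : A.subst σ = B.subst σ := by
  obtain ⟨p, f⟩ := A
  obtain ⟨q, g⟩ := B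
  dsimp only at hp
  subst hp
  exact congrArg (Atom.mk p) (funext fun i => hσ.2.2 _ ⟨rfl, i, rfl⟩)

lemma occurs_mem_eqnVars_atomEqs {A B : Atom S} (hp : A.pred = B.pred) {x : ℕ}
    (hx : A.Occurs x) : x ∈ eqnVars (atomEqs A B) :=
  let ⟨i, hi⟩ := hx
  ⟨_, ⟨hp, i, rfl⟩, Or.inl hi⟩

lemma ground_subst_of_mem_sol_atomEqs {A B : Atom S} (hp : A.pred = B.pred)
    (hσ : σ ∈ sol (atomEqs A B)) : (A.subst σ).Ground :=
  ground_subst hσ.1 fun _ hx => hσ.2.1 (occurs_mem_eqnVars_atomEqs hp hx)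

end Atom

lemma ground_subst_of_goalVars_subset {S : Sig} {σ : Subst S} {E : Set (Eqn S)}
    {G : List (Atom S)} (hσ : σ ∈ sol E) (hG : goalVars G ⊆ eqnVars E) {A : Atom S}
    (hA : A ∈ G) : (A.subst σ).Ground :=
  Atom.ground_subst hσ.1 fun _ hx => hσ.2.1 (hG ⟨A, hA, hx⟩)

section Program

variable {S : Sig} {P Q coP : Set (Clause S)}

lemma groundInst_mono (h : P ⊆ Q) : GroundInst P ⊆ GroundInst Q :=
  fun _ ⟨C, hC, hσ⟩ => ⟨C, h hC, hσ⟩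

lemma subst_subst_mem_groundInst {C : Clause S} (hC : C ∈ P) {ρ σ : Subst S}
    (hhead : ((C.head.subst ρ).subst σ).Ground)
    (hbody : ∀ B ∈ C.body, ((B.subst ρ).subst σ).Ground) :
    ((C.head.subst ρ).subst σ, (C.body.map (·.subst ρ)).map (·.subst σ))
      ∈ GroundInst P := by
  have hbody_eq : (C.body.map (·.subst ρ)).map (·.subst σ)
      = C.body.map (·.subst (ρ.groundComp σ)) := by
    rw [List.map_map]
    exact List.map_congr_left fun B hB => Atom.subst_subst (C.finBody B hB) (hbody B hB)
  refine ⟨C, hC, ρ.groundComp σ, Subst.groundComp_ground,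
    Atom.subst_subst C.finHead hhead, hbody_eq, hhead, ?_⟩
  simpa only [List.map_map, List.mem_map, Function.comp_apply, forall_exists_index, and_imp,
    forall_apply_eq_imp_iff₂] using hbody

lemma isModel_Ind (P : Set (Clause S)) : IsModel P (Ind P) :=
  fun _ ⟨r, hr, hA, hbody⟩ => Set.mem_sInter.2 fun _ hI =>
    hI ⟨r, hr, hA, fun B hB => Set.mem_sInter.1 (hbody B hB) _ hI⟩

lemma LoopInd.mem_Ind {H : Set (Atom S)} {A : Atom S} (h : LoopInd P coP H A) :
    A ∈ Ind (P ∪ coP) := by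
  induction h with
  | hp _ hInd => exact hInd
  | rule r hr hA _ IH =>
    exact isModel_Ind _ ⟨r, groundInst_mono Set.subset_union_left hr, hA, IH⟩

end Program

lemma goalVars_middle_subset {S : Sig} {G1 G2 : List (Atom S)} {A B : Atom S}
    {E : Set (Eqn S)} (hp : A.pred = B.pred) (hAB : atomEqs A B ⊆ E)
    (hG : goalVars (G1 ++ G2) ⊆ eqnVars E) : goalVars (G1 ++ A :: G2) ⊆ eqnVars E := by
  rintro x ⟨A', hA', hx⟩
  rcases List.mem_cons.1 (List.perm_middle.mem_iff.1 hA') with rfl | hA'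
  · exact eqnVars_mono hAB (Atom.occurs_mem_eqnVars_atomEqs hp hx)
  · exact hG ⟨A', hA', hx⟩

namespace OpSem

variable {S : Sig} {P coP : Set (Clause S)} {H : Set (Atom S)} {G : List (Atom S)}
  {E E' : Set (Eqn S)}

lemma subset (h : OpSem S P coP H G E E') : E ⊆ E' := by
  induction h with
  | empty => exact subset_rfl
  | cohyp _ _ _ _ _ _ IH1 IH2 => exact (Set.subset_union_left.trans IH1).trans IH2
  | step _ _ _ _ _ _ _ _ IH1 IH2 => exact (Set.subset_union_left.trans IH1).trans IH2

lemma goalVars_subset (h : OpSem S P coP H G E E') : goalVars G ⊆ eqnVars E' := by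
  induction h with
  | empty => rintro x ⟨A, hA, _⟩; cases hA
  | cohyp _ _ hp _ h1 h2 _ IH2 =>
    exact goalVars_middle_subset hp
      (Set.subset_union_right.trans (h1.subset.trans h2.subset)) IH2
  | step C ρ _ _ hp _ h1 h2 _ IH2 =>
    exact goalVars_middle_subset (B := C.head.subst ρ) hp
      (Set.subset_union_right.trans (h1.subset.trans h2.subset)) IH2

theorem loopInd (h : OpSem S P coP H G E E') :
    ∀ σ ∈ sol E', ∀ A ∈ G, LoopInd P coP ((·.subst σ) '' H) (A.subst σ) := by
  induction h with
  | empty => intro _ _ _ hA; cases hA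
  | @cohyp P coP _ _ _ _ B _ E2 _ _ hB hp _ h1 h2 IH1 IH2 =>
    intro σ hσ A' hA'
    rcases List.mem_cons.1 (List.perm_middle.mem_iff.1 hA') with rfl | hA'
    · have hσ2 : σ ∈ sol E2 := sol_anti h2.subset hσ
      have hAB : A'.subst σ = B.subst σ := Atom.subst_eq_of_mem_sol_atomEqs hp
        (sol_anti (Set.subset_union_right.trans h1.subset) hσ2)
      have hInd : A'.subst σ ∈ Ind (P ∪ coP) := by
        simpa only [Set.union_empty] using (IH1 σ hσ2 A' (List.mem_singleton_self _)).mem_Ind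
      exact LoopInd.hp ⟨B, hB, hAB.symm⟩ hInd
    · exact IH2 σ hσ A' hA'
  | @step _ _ _ _ _ _ _ E2 _ C ρ hC _ hp _ h1 h2 IH1 IH2 =>
    intro σ hσ A' hA'
    rcases List.mem_cons.1 (List.perm_middle.mem_iff.1 hA') with rfl | hA'
    · have hσ2 : σ ∈ sol E2 := sol_anti h2.subset hσ
      have hσA : σ ∈ sol (atomEqs A' (C.head.subst ρ)) :=
        sol_anti (Set.subset_union_right.trans h1.subset) hσ2
      have hhead : A'.subst σ = (C.head.subst ρ).subst σ :=
        Atom.subst_eq_of_mem_sol_atomEqs hp hσA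
      have hinst := subst_subst_mem_groundInst hC
        (hhead ▸ Atom.ground_subst_of_mem_sol_atomEqs (B := C.head.subst ρ) hp hσA) fun B hB =>
          ground_subst_of_goalVars_subset hσ2 h1.goalVars_subset (List.mem_map_of_mem hB)
      refine LoopInd.rule _ hinst hhead.symm ?_
      intro _ hB'
      obtain ⟨B, hB, rfl⟩ := List.mem_map.1 hB'
      simpa only [Set.image_union, Set.image_singleton] using IH1 σ hσ2 B hB
    · exact IH2 σ hσ A' hA'

end OpSem

theorem soundness_wrt_loop_general (S : Sig) (P coP : Set (Clause S))
    (H : Set (Atom S)) (G : List (Atom S)) (E E' : Set (Eqn S))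
    (h : OpSem S P coP H G E E')
    (σ : Subst S) (hσ : σ ∈ sol E')
    (A : Atom S) (hA : A ∈ G) :
    LoopInd P coP ((fun B => B.subst σ) '' H) (A.subst σ) :=
  h.loopInd σ hσ A hA

/-- Soundness w.r.t. the inductive characterization of regular semantics: if resolution of
`⟨A1,...,An | E⟩` under coinductive hypotheses `H` succeeds with output `E'`, then for every
solution `σ` of `E'` and every atom `Ai` of the goal, `Hσ ⊢ Aiσ` is derivable in `Loop(P,coP)`. -/
theorem soundness_wrt_loop (S : Sig) (P coP : Set (Clause S))
    (hP : P.Finite) (hcoP : coP.Finite)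
    (H : Set (Atom S)) (hHfin : H.Finite) (hHsyn : ∀ B ∈ H, B.IsFinite)
    (G : List (Atom S)) (hG : ∀ A ∈ G, A.IsFinite)
    (E E' : Set (Eqn S)) (hE : EqnSetFin E)
    (hvars : atomsVars H ⊆ eqnVars E)
    (h : OpSem S P coP H G E E')
    (σ : Subst S) (hσ : σ ∈ sol E')
    (A : Atom S) (hA : A ∈ G) :
    LoopInd P coP ((fun B => B.subst σ) '' H) (A.subst σ) :=
  soundness_wrt_loop_general S P coP H G E E' h σ hσ A hA

end FlexLP
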